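/- Suppose for each agent i ∈ {1,…,m} the sequence of uncertain likelihood updates satisfies ℓ^i_θ(ω^i_t) → 1 in probability as t → ∞, and each ℓ^i_θ(ω^i_t) is strictly positive and finite almost surely. Let beliefs evolve as log μ^i_{t+1}(θ) = log ℓ^i_θ(ω^i_{t+1}) + Σ_j [A]_{ij} log μ^j_t(θ) with μ^i_0(θ) = 1, where A is doubly stochastic with ‖A^t − (1/m)11'‖ ≤ √2 m λ^t, λ ∈ (0,1). Then ‖log μ_t(θ) − (1/m) Σ_{i=1}^m log Λ^i_θ(t) · 1‖ → 0 in probability, where log Λ^i_θ(t) = Σ_{τ=1}^t log ℓ^i_θ(ω^i_τ). -/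

import Mathlib

/-!
Unrolling the recursion gives `log μ_t = ∑_{τ ≤ t} A^{t-τ} log ℓ(τ)`, and the average of the
`log Λ^i(t)` is the same sum with `A^{t-τ}` replaced by the averaging matrix `(1/m)11'`. The
consensus error is thus a convolution of the geometrically decaying `‖A^s - (1/m)11'‖` with
`‖log ℓ(τ)‖`, which tends to `0` almost surely; such a convolution tends to `0` by dominated
convergence for series (Tannery's theorem).
-/

open Filter Finset Matrix MeasureTheory Topology
open scoped Matrix.Norms.L2Operator

theorem tendsto_sum_Icc_pow_sub_mul {l : ℝ} (hl : |l| < 1) {a : ℕ → ℝ}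
    (ha : Tendsto a atTop (𝓝 0)) :
    Tendsto (fun t => ∑ τ ∈ Icc 1 t, l ^ (t - τ) * a τ) atTop (𝓝 0) := by
  obtain ⟨C, hC⟩ := ha.norm.bddAbove_range
  set f : ℕ → ℕ → ℝ := fun t k => if k < t then l ^ k * a (t - k) else 0
  have hsum : ∀ t, ∑ τ ∈ Icc 1 t, l ^ (t - τ) * a τ = ∑' k, f t k := by
    intro t
    rw [tsum_eq_sum (s := range t) fun k hk => if_neg (by simpa using hk)]
    refine sum_nbij' (t - ·) (t - ·) ?_ ?_ ?_ ?_ ?_ <;> intro τ hτ <;>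
      simp only [mem_Icc, mem_range] at hτ ⊢
    any_goals omega
    rw [if_pos (by omega), Nat.sub_sub_self hτ.2]
  have hf : ∀ k, Tendsto (f · k) atTop (𝓝 0) := fun k => by
    have h : Tendsto (fun t => l ^ k * a (t - k)) atTop (𝓝 (l ^ k * 0)) :=
      (ha.comp (tendsto_sub_atTop_nat k)).const_mul _
    rw [mul_zero] at h
    exact h.congr' <| (eventually_gt_atTop k).mono fun t ht => (if_pos ht).symm
  have hbound : ∀ t k, ‖f t k‖ ≤ C * |l| ^ k := fun t k => by
    by_cases hk : k < t
    · simp only [f, if_pos hk, norm_mul, norm_pow, Real.norm_eq_abs, mul_comm C]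
      exact mul_le_mul_of_nonneg_left (hC ⟨t - k, rfl⟩) (by positivity)
    · simp only [f, if_neg hk, norm_zero]
      exact mul_nonneg ((norm_nonneg _).trans (hC ⟨0, rfl⟩)) (by positivity)
  simpa only [hsum, tsum_zero] using tendsto_tsum_of_dominated_convergence
    ((summable_geometric_of_lt_one (abs_nonneg l) hl).mul_left C) hf (.of_forall hbound)

theorem Matrix.eq_sum_Icc_pow_mulVec {n R : Type*} [Fintype n] [DecidableEq n] [Semiring R]
    (A : Matrix n n R) {x c : ℕ → n → R} (h0 : x 0 = 0)
    (hsucc : ∀ t, x (t + 1) = c (t + 1) + A *ᵥ x t) (t : ℕ) :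
    x t = ∑ τ ∈ Icc 1 t, (A ^ (t - τ)) *ᵥ c τ := by
  induction t with
  | zero => simp [h0]
  | succ t ih =>
    have hshift : A *ᵥ ∑ τ ∈ Icc 1 t, (A ^ (t - τ)) *ᵥ c τ =
        ∑ τ ∈ Icc 1 t, (A ^ (t + 1 - τ)) *ᵥ c τ := by
      rw [mulVec_sum]
      refine sum_congr rfl fun τ hτ => ?_
      rw [mulVec_mulVec, ← pow_succ', Nat.sub_add_comm (mem_Icc.1 hτ).2]
    rw [hsucc, ih, hshift, sum_Icc_succ_top (Nat.le_add_left 1 t), Nat.sub_self, pow_zero,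
      one_mulVec, add_comm]

theorem Matrix.tendsto_norm_sum_Icc_pow_sub_mulVec {n 𝕜 : Type*} [Fintype n] [DecidableEq n]
    [RCLike 𝕜] {A M : Matrix n n 𝕜} {K l : ℝ} (hl : |l| < 1)
    (hmix : ∀ t : ℕ, ‖A ^ t - M‖ ≤ K * l ^ t) {c : ℕ → n → 𝕜}
    (hc : Tendsto (fun t => ‖WithLp.toLp 2 (c t)‖) atTop (𝓝 0)) :
    Tendsto (fun t => ‖WithLp.toLp 2 (∑ τ ∈ Icc 1 t, (A ^ (t - τ) - M) *ᵥ c τ)‖)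
      atTop (𝓝 0) := by
  refine squeeze_zero (fun _ => norm_nonneg _) (fun t => ?_)
    (tendsto_sum_Icc_pow_sub_mul hl (by simpa using hc.const_mul K))
  rw [WithLp.toLp_sum]
  refine (norm_sum_le _ _).trans (sum_le_sum fun τ _ => ?_)
  calc ‖WithLp.toLp 2 ((A ^ (t - τ) - M) *ᵥ c τ)‖
      ≤ ‖A ^ (t - τ) - M‖ * ‖WithLp.toLp 2 (c τ)‖ := l2_opNorm_mulVec _ (WithLp.toLp 2 (c τ))
    _ ≤ K * l ^ (t - τ) * ‖WithLp.toLp 2 (c τ)‖ := by gcongr; exact hmix _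
    _ = l ^ (t - τ) * (K * ‖WithLp.toLp 2 (c τ)‖) := by ring

theorem stmt_6_general {Ω : Type*} [MeasurableSpace Ω] (P : Measure Ω)
    (m : ℕ) (A : Matrix (Fin m) (Fin m) ℝ)
    (l : ℝ) (hl0 : 0 < l) (hl1 : l < 1)
    (hmix : ∀ t : ℕ,
      ‖A ^ t - (1 / (m : ℝ)) • Matrix.of (fun _ _ : Fin m => (1 : ℝ))‖ ≤
        Real.sqrt 2 * m * l ^ t)
    (ℓ : ℕ → Fin m → Ω → ℝ)
    (hconv : ∀ i, ∀ᵐ ω ∂P, Tendsto (fun t => ℓ t i ω) atTop (nhds 1))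
    (μb : ℕ → Ω → Fin m → ℝ)
    (hμ0 : ∀ ω i, μb 0 ω i = 1)
    (hrec : ∀ t ω i, Real.log (μb (t + 1) ω i) =
      Real.log (ℓ (t + 1) i ω) + ∑ j, A i j * Real.log (μb t ω j)) :
    ∀ᵐ ω ∂P, Tendsto (fun t => ‖(WithLp.equiv 2 (Fin m → ℝ)).symm
        (fun i => Real.log (μb t ω i) -
          (1 / (m : ℝ)) * ∑ j, ∑ τ ∈ Finset.Icc 1 t, Real.log (ℓ τ j ω))‖)
      atTop (nhds 0) := by
  filter_upwards [ae_all_iff.2 hconv] with ω hω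
  set c : ℕ → Fin m → ℝ := fun t i => Real.log (ℓ t i ω)
  set x : ℕ → Fin m → ℝ := fun t i => Real.log (μb t ω i)
  have hc : Tendsto (fun t => ‖WithLp.toLp 2 (c t)‖) atTop (𝓝 0) := by
    have hlog : Tendsto c atTop (𝓝 0) := tendsto_pi_nhds.2 fun i => by
      simpa [c, Function.comp_def] using
        (Real.continuousAt_log one_ne_zero).tendsto.comp (hω i)
    simpa using ((PiLp.continuous_toLp 2 _).tendsto 0).comp hlog |>.norm
  have hx : ∀ t, x t = ∑ τ ∈ Icc 1 t, (A ^ (t - τ)) *ᵥ c τ :=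
    A.eq_sum_Icc_pow_mulVec (funext fun i => by simp [x, hμ0]) (fun t => funext (hrec t ω))
  refine (A.tendsto_norm_sum_Icc_pow_sub_mulVec (abs_lt.2 ⟨by linarith, hl1⟩) hmix hc).congr
    fun t => ?_
  congr 2
  simp only [sub_mulVec, sum_sub_distrib, ← hx]
  ext i
  simp [x, c, mulVec, dotProduct, mul_sum, sum_comm (s := Icc 1 t)]

/-- Consensus of log-beliefs on the average log uncertain likelihood ratio: if each agent's
uncertain likelihood updates `ℓ^i_θ(ω^i_t)` are a.s. positive and converge to `1` a.s.,
beliefs evolve by `log μ^i_{t+1} = log ℓ^i(t+1) + ∑_j A_{ij} log μ^j_t` with `μ^i_0 = 1`,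
and `A` is doubly stochastic with `‖A^t − (1/m)11'‖ ≤ √2 m λ^t`, `λ ∈ (0,1)`, then a.s.
`‖log μ_t − (1/m)(∑_i log Λ^i(t)) 1‖ → 0`, where `log Λ^i(t) = ∑_{τ=1}^t log ℓ^i(τ)`. -/
theorem stmt_6 {Ω : Type*} [MeasurableSpace Ω] (P : Measure Ω) [IsProbabilityMeasure P]
    (m : ℕ) (A : Matrix (Fin m) (Fin m) ℝ)
    (hA0 : ∀ i j, 0 ≤ A i j)
    (hrow : ∀ i, ∑ j, A i j = 1) (hcol : ∀ j, ∑ i, A i j = 1)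
    (l : ℝ) (hl0 : 0 < l) (hl1 : l < 1)
    (hmix : ∀ t : ℕ,
      ‖A ^ t - (1 / (m : ℝ)) • Matrix.of (fun _ _ : Fin m => (1 : ℝ))‖ ≤
        Real.sqrt 2 * m * l ^ t)
    (ℓ : ℕ → Fin m → Ω → ℝ)
    (hpos : ∀ t i, ∀ᵐ ω ∂P, 0 < ℓ t i ω)
    (hconv : ∀ i, ∀ᵐ ω ∂P, Tendsto (fun t => ℓ t i ω) atTop (nhds 1))
    (μb : ℕ → Ω → Fin m → ℝ)
    (hμ0 : ∀ ω i, μb 0 ω i = 1)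
    (hrec : ∀ t ω i, Real.log (μb (t + 1) ω i) =
      Real.log (ℓ (t + 1) i ω) + ∑ j, A i j * Real.log (μb t ω j)) :
    ∀ᵐ ω ∂P, Tendsto (fun t => ‖(WithLp.equiv 2 (Fin m → ℝ)).symm
        (fun i => Real.log (μb t ω i) -
          (1 / (m : ℝ)) * ∑ j, ∑ τ ∈ Finset.Icc 1 t, Real.log (ℓ τ j ω))‖)
      atTop (nhds 0) :=
  stmt_6_general P m A l hl0 hl1 hmix ℓ hconv μb hμ0 hrec
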